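/- arXiv:1804.08116 — 7 statements merged into one kernel-verified Lean document; each statement's English description precedes it below -/
import Mathlib

section
/- Constrained risk inequality (convex case): Let P₀, P₁ be probability measures on Z with P₁ ≪ P₀, ℓ : ℝ≥0 → ℝ≥0 convex and non-decreasing, and θ₀, θ₁ ∈ ℝ^k. Define Δ = 2ℓ(‖θ₀ - θ₁‖/2) and I = ∫(dP₁/dP₀)² dP₀. If a measurable estimator θ̂ : Z → ℝ^k satisfies E_{P₀}[ℓ(‖θ̂ - θ₀‖)] ≤ δ, then E_{P₁}[ℓ(‖θ̂ - θ₁‖)] ≥ (max(Δ^{1/2} - (I·δ)^{1/2}, 0))². -/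
/-!
Pointwise, the triangle inequality, monotonicity and midpoint convexity of `ℓ` give
`Δ ≤ ℓ ‖θ̂ - θ₀‖ + ℓ ‖θ̂ - θ₁‖`, hence `√Δ ≤ √(ℓ ‖θ̂ - θ₀‖) + √(ℓ ‖θ̂ - θ₁‖)` by subadditivity of
`√`. Integrate against `P₁`: the second term contributes at most `√(R(θ̂, P₁))` by Jensen, and the
first, rewritten as an integral against `P₀` with density `dP₁/dP₀`, at most `√(I δ)` by
Cauchy–Schwarz.
-/

open MeasureTheory

theorem Real.sqrt_add_le_add_sqrt (a b : ℝ) : √(a + b) ≤ √a + √b := by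
  have hsq : a + b ≤ (√a + √b) ^ 2 := by
    nlinarith [Real.sq_sqrt' (x := a), Real.sq_sqrt' (x := b), le_max_left a 0, le_max_left b 0,
      mul_nonneg (Real.sqrt_nonneg a) (Real.sqrt_nonneg b)]
  simpa [Real.sqrt_sq (by positivity : 0 ≤ √a + √b)] using Real.sqrt_le_sqrt hsq

theorem max_sub_zero_sq_le_of_le_add_sqrt {x a R : ℝ} (hR : 0 ≤ R) (h : x ≤ a + √R) :
    max (x - a) 0 ^ 2 ≤ R := by
  calc max (x - a) 0 ^ 2 ≤ √R ^ 2 := by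
        gcongr
        exact max_le (by linarith) (Real.sqrt_nonneg R)
    _ = R := Real.sq_sqrt hR

section Loss

variable {ℓ : ℝ → ℝ}

theorem ConvexOn.two_mul_map_add_div_two_le (hconv : ConvexOn ℝ (Set.Ici 0) ℓ) {a b : ℝ}
    (ha : 0 ≤ a) (hb : 0 ≤ b) : 2 * ℓ ((a + b) / 2) ≤ ℓ a + ℓ b := by
  have h := hconv.2 (Set.mem_Ici.mpr ha) (Set.mem_Ici.mpr hb) (by norm_num : (0 : ℝ) ≤ 1 / 2)
    (by norm_num : (0 : ℝ) ≤ 1 / 2) (by norm_num)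
  simp only [smul_eq_mul] at h
  rw [show 1 / 2 * a + 1 / 2 * b = (a + b) / 2 by ring] at h
  linarith

theorem two_mul_map_half_dist_le {X : Type*} [PseudoMetricSpace X]
    (hconv : ConvexOn ℝ (Set.Ici 0) ℓ) (hmono : MonotoneOn ℓ (Set.Ici 0)) (x y z : X) :
    2 * ℓ (dist x y / 2) ≤ ℓ (dist z x) + ℓ (dist z y) := by
  have hmid : ℓ (dist x y / 2) ≤ ℓ ((dist z x + dist z y) / 2) :=
    hmono (Set.mem_Ici.mpr (by positivity)) (Set.mem_Ici.mpr (by positivity))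
      (by linarith [dist_triangle_left x y z])
  linarith [hconv.two_mul_map_add_div_two_le (dist_nonneg (x := z) (y := x))
    (dist_nonneg (x := z) (y := y))]

end Loss

section Integral

variable {Z : Type*} [MeasurableSpace Z] {μ ν : Measure Z} {f : Z → ℝ}

theorem memLp_two_sqrt (hf0 : 0 ≤ f) (hf : Integrable f μ) : MemLp (fun z => √(f z)) 2 μ := by
  rw [memLp_two_iff_integrable_sq (Real.continuous_sqrt.comp_aestronglyMeasurable hf.1)]
  exact hf.congr (Filter.Eventually.of_forall fun z => (Real.sq_sqrt (hf0 z)).symm)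

theorem integral_mul_le_sqrt_integral_sq_mul_sqrt_integral_sq {g : Z → ℝ}
    (hf0 : 0 ≤ᵐ[μ] f) (hg0 : 0 ≤ᵐ[μ] g) (hf : MemLp f 2 μ) (hg : MemLp g 2 μ) :
    ∫ z, f z * g z ∂μ ≤ √(∫ z, f z ^ 2 ∂μ) * √(∫ z, g z ^ 2 ∂μ) := by
  have h := integral_mul_le_Lp_mul_Lq_of_nonneg Real.HolderConjugate.two_two hf0 hg0
    (by simpa using hf) (by simpa using hg)
  simpa only [Real.rpow_two, Real.sqrt_eq_rpow] using h

theorem integral_sqrt_le_sqrt_integral [IsProbabilityMeasure μ] (hf0 : 0 ≤ f)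
    (hf : Integrable f μ) : ∫ z, √(f z) ∂μ ≤ √(∫ z, f z ∂μ) :=
  Real.strictConcaveOn_sqrt.concaveOn.le_map_integral Real.continuous_sqrt.continuousOn
    isClosed_Ici (Filter.Eventually.of_forall hf0) hf
    ((memLp_two_sqrt hf0 hf).integrable one_le_two)

theorem memLp_two_toReal_rnDeriv (hI : Integrable (fun z => (μ.rnDeriv ν z).toReal ^ 2) ν) :
    MemLp (fun z => (μ.rnDeriv ν z).toReal) 2 ν :=
  (memLp_two_iff_integrable_sq
    (Measure.measurable_rnDeriv μ ν).ennreal_toReal.aestronglyMeasurable).2 hI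

variable [SigmaFinite μ] [SigmaFinite ν]

theorem integrable_sqrt_of_integrable_rnDeriv_sq (hac : μ ≪ ν)
    (hI : Integrable (fun z => (μ.rnDeriv ν z).toReal ^ 2) ν) (hf0 : 0 ≤ f)
    (hf : Integrable f ν) : Integrable (fun z => √(f z)) μ :=
  (integrable_toReal_rnDeriv_mul_iff hac).1
    ((memLp_two_toReal_rnDeriv hI).integrable_mul (memLp_two_sqrt hf0 hf))

theorem integral_sqrt_le_sqrt_integral_rnDeriv_sq_mul (hac : μ ≪ ν)
    (hI : Integrable (fun z => (μ.rnDeriv ν z).toReal ^ 2) ν) (hf0 : 0 ≤ f)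
    (hf : Integrable f ν) :
    ∫ z, √(f z) ∂μ ≤ √((∫ z, (μ.rnDeriv ν z).toReal ^ 2 ∂ν) * ∫ z, f z ∂ν) := by
  rw [← integral_toReal_rnDeriv_mul hac, Real.sqrt_mul (integral_nonneg fun z => sq_nonneg _)]
  calc ∫ z, (μ.rnDeriv ν z).toReal * √(f z) ∂ν
      ≤ √(∫ z, (μ.rnDeriv ν z).toReal ^ 2 ∂ν) * √(∫ z, √(f z) ^ 2 ∂ν) :=
        integral_mul_le_sqrt_integral_sq_mul_sqrt_integral_sq
          (Filter.Eventually.of_forall fun _ => ENNReal.toReal_nonneg)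
          (Filter.Eventually.of_forall fun z => Real.sqrt_nonneg (f z)) (memLp_two_toReal_rnDeriv hI)
          (memLp_two_sqrt hf0 hf)
    _ = √(∫ z, (μ.rnDeriv ν z).toReal ^ 2 ∂ν) * √(∫ z, f z ∂ν) := by
        simp only [Real.sq_sqrt (hf0 _)]

end Integral

theorem constrained_risk_inequality_convex_general {Z : Type*} [MeasurableSpace Z]
    (P₀ P₁ : Measure Z) [IsProbabilityMeasure P₀] [IsProbabilityMeasure P₁]
    (hac : P₁ ≪ P₀)
    (ℓ : ℝ → ℝ) (hconv : ConvexOn ℝ (Set.Ici 0) ℓ)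
    (hmono : MonotoneOn ℓ (Set.Ici 0)) (hnonneg : ∀ x ∈ Set.Ici (0 : ℝ), 0 ≤ ℓ x)
    {k : ℕ} (θ₀ θ₁ : EuclideanSpace ℝ (Fin k))
    (θhat : Z → EuclideanSpace ℝ (Fin k)) (δ : ℝ)
    (hI : Integrable (fun z => ((P₁.rnDeriv P₀ z).toReal) ^ 2) P₀)
    (hint₀ : Integrable (fun z => ℓ ‖θhat z - θ₀‖) P₀)
    (hint₁ : Integrable (fun z => ℓ ‖θhat z - θ₁‖) P₁)
    (hrisk : ∫ z, ℓ ‖θhat z - θ₀‖ ∂P₀ ≤ δ) :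
    (max (Real.sqrt (2 * ℓ (‖θ₀ - θ₁‖ / 2)) -
        Real.sqrt ((∫ z, ((P₁.rnDeriv P₀ z).toReal) ^ 2 ∂P₀) * δ)) 0) ^ 2
      ≤ ∫ z, ℓ ‖θhat z - θ₁‖ ∂P₁ := by
  have hloss₀ : 0 ≤ fun z => ℓ ‖θhat z - θ₀‖ := fun z => hnonneg _ (norm_nonneg _)
  have hloss₁ : 0 ≤ fun z => ℓ ‖θhat z - θ₁‖ := fun z => hnonneg _ (norm_nonneg _)
  have hsqrt_int₀ := integrable_sqrt_of_integrable_rnDeriv_sq hac hI hloss₀ hint₀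
  have hsqrt_int₁ := (memLp_two_sqrt hloss₁ hint₁).integrable one_le_two
  refine max_sub_zero_sq_le_of_le_add_sqrt (integral_nonneg hloss₁) ?_
  calc √(2 * ℓ (‖θ₀ - θ₁‖ / 2))
      = ∫ _ : Z, √(2 * ℓ (‖θ₀ - θ₁‖ / 2)) ∂P₁ := by simp
    _ ≤ ∫ z, (√(ℓ ‖θhat z - θ₀‖) + √(ℓ ‖θhat z - θ₁‖)) ∂P₁ := by
        refine integral_mono (integrable_const _) (hsqrt_int₀.add hsqrt_int₁) fun z => ?_
        simp only [← dist_eq_norm]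
        exact (Real.sqrt_le_sqrt (two_mul_map_half_dist_le hconv hmono θ₀ θ₁ (θhat z))).trans
          (Real.sqrt_add_le_add_sqrt _ _)
    _ = ∫ z, √(ℓ ‖θhat z - θ₀‖) ∂P₁ + ∫ z, √(ℓ ‖θhat z - θ₁‖) ∂P₁ :=
        integral_add hsqrt_int₀ hsqrt_int₁
    _ ≤ √((∫ z, ((P₁.rnDeriv P₀ z).toReal) ^ 2 ∂P₀) * δ) + √(∫ z, ℓ ‖θhat z - θ₁‖ ∂P₁) := by
        gcongr
        · refine (integral_sqrt_le_sqrt_integral_rnDeriv_sq_mul hac hI hloss₀ hint₀).trans ?_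
          gcongr
        · exact integral_sqrt_le_sqrt_integral hloss₁ hint₁

theorem constrained_risk_inequality_convex {Z : Type*} [MeasurableSpace Z]
    (P₀ P₁ : Measure Z) [IsProbabilityMeasure P₀] [IsProbabilityMeasure P₁]
    (hac : P₁ ≪ P₀)
    (ℓ : ℝ → ℝ) (hconv : ConvexOn ℝ (Set.Ici 0) ℓ)
    (hmono : MonotoneOn ℓ (Set.Ici 0)) (hnonneg : ∀ x ∈ Set.Ici (0 : ℝ), 0 ≤ ℓ x)
    {k : ℕ} (θ₀ θ₁ : EuclideanSpace ℝ (Fin k))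
    (θhat : Z → EuclideanSpace ℝ (Fin k)) (hmeas : Measurable θhat) (δ : ℝ)
    (hI : Integrable (fun z => ((P₁.rnDeriv P₀ z).toReal) ^ 2) P₀)
    (hint₀ : Integrable (fun z => ℓ ‖θhat z - θ₀‖) P₀)
    (hint₁ : Integrable (fun z => ℓ ‖θhat z - θ₁‖) P₁)
    (hrisk : ∫ z, ℓ ‖θhat z - θ₀‖ ∂P₀ ≤ δ) :
    (max (Real.sqrt (2 * ℓ (‖θ₀ - θ₁‖ / 2)) -
        Real.sqrt ((∫ z, ((P₁.rnDeriv P₀ z).toReal) ^ 2 ∂P₀) * δ)) 0) ^ 2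
      ≤ ∫ z, ℓ ‖θhat z - θ₁‖ ∂P₁ :=
  constrained_risk_inequality_convex_general P₀ P₁ hac ℓ hconv hmono hnonneg θ₀ θ₁ θhat δ hI hint₀
    hint₁ hrisk
end

section
/- Constrained risk inequality (general losses): Let P₀, P₁ be probability measures on Z with P₁ ≪ P₀, ℓ : ℝ≥0 → ℝ≥0 non-decreasing (not necessarily convex), and θ₀, θ₁ ∈ ℝ^k. Define Δ = ℓ(‖θ₀ - θ₁‖/2) and I = ∫(dP₁/dP₀)² dP₀. If E_{P₀}[ℓ(‖θ̂ - θ₀‖)] ≤ δ for a measurable θ̂ : Z → ℝ^k, then E_{P₁}[ℓ(‖θ̂ - θ₁‖)] ≥ (max(Δ^{1/2} - (I·δ)^{1/2}, 0))². -/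
open MeasureTheory

/-!
For every `z` one of `θhat z`'s distances to `θ₀` and `θ₁` is at least `‖θ₀ - θ₁‖ / 2`, so by
monotonicity `√Δ ≤ √ℓ₀(z) + √ℓ₁(z)` with `ℓᵢ(z) = ℓ ‖θhat z - θᵢ‖`. Integrating against `P₁`,
the `ℓ₀` term is moved to `P₀` through the density `dP₁/dP₀` and bounded by Cauchy–Schwarz by
`√(I δ)`, while Jensen bounds the `ℓ₁` term by the square root of the `P₁`-risk.
-/

theorem MonotoneOn.sqrt_apply_half_norm_sub_le {ℓ : ℝ → ℝ} {E : Type*} [SeminormedAddCommGroup E]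
    (hmono : MonotoneOn ℓ (Set.Ici 0)) (u v w : E) :
    √(ℓ (‖u - v‖ / 2)) ≤ √(ℓ ‖w - u‖) + √(ℓ ‖w - v‖) := by
  have htri : ‖u - v‖ ≤ ‖w - u‖ + ‖w - v‖ := by
    simpa only [norm_sub_rev u w] using norm_sub_le_norm_sub_add_norm_sub u w v
  have hhalf : (0 : ℝ) ≤ ‖u - v‖ / 2 := by positivity
  rcases le_or_gt (‖u - v‖ / 2) ‖w - u‖ with hu | hu
  · exact (Real.sqrt_le_sqrt (hmono hhalf (norm_nonneg _) hu)).trans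
      (le_add_of_nonneg_right (Real.sqrt_nonneg _))
  · exact (Real.sqrt_le_sqrt (hmono hhalf (norm_nonneg _) (by linarith))).trans
      (le_add_of_nonneg_left (Real.sqrt_nonneg _))

section

variable {α : Type*} [MeasurableSpace α] {μ ν : Measure α} {f g : α → ℝ}

theorem MeasureTheory.Integrable.memLp_two_sqrt (hg : Integrable g μ) (hg0 : 0 ≤ᵐ[μ] g) :
    MemLp (fun x => √(g x)) 2 μ :=
  (memLp_two_iff_integrable_sq
    (Real.continuous_sqrt.comp_aestronglyMeasurable hg.aestronglyMeasurable)).2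
    (hg.congr (hg0.mono fun _ hx => (Real.sq_sqrt hx).symm))

theorem integral_mul_le_sqrt_mul_sqrt (hf0 : 0 ≤ᵐ[μ] f) (hg0 : 0 ≤ᵐ[μ] g)
    (hf : MemLp f 2 μ) (hg : MemLp g 2 μ) :
    ∫ x, f x * g x ∂μ ≤ √(∫ x, f x ^ 2 ∂μ) * √(∫ x, g x ^ 2 ∂μ) := by
  have h := integral_mul_le_Lp_mul_Lq_of_nonneg Real.HolderConjugate.two_two hf0 hg0
    (by simpa using hf) (by simpa using hg)
  simpa only [Real.sqrt_eq_rpow, Real.rpow_two] using h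

theorem integral_sqrt_le_sqrt_integral_s7 [IsProbabilityMeasure μ] (hg : Integrable g μ)
    (hg0 : 0 ≤ᵐ[μ] g) : ∫ x, √(g x) ∂μ ≤ √(∫ x, g x ∂μ) :=
  Real.strictConcaveOn_sqrt.concaveOn.le_map_integral Real.continuous_sqrt.continuousOn
    isClosed_Ici hg0 hg ((hg.memLp_two_sqrt hg0).integrable one_le_two)

variable [SigmaFinite μ] [SigmaFinite ν]

theorem integrable_sqrt_and_integral_sqrt_le_of_rnDeriv_sq (hac : ν ≪ μ)
    (hρ : Integrable (fun x => (ν.rnDeriv μ x).toReal ^ 2) μ) (hg : Integrable g μ)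
    (hg0 : 0 ≤ᵐ[μ] g) :
    Integrable (fun x => √(g x)) ν ∧
      ∫ x, √(g x) ∂ν ≤ √(∫ x, (ν.rnDeriv μ x).toReal ^ 2 ∂μ) * √(∫ x, g x ∂μ) := by
  have hρ2 : MemLp (fun x => (ν.rnDeriv μ x).toReal) 2 μ :=
    (memLp_two_iff_integrable_sq
      (Measure.measurable_rnDeriv ν μ).ennreal_toReal.aestronglyMeasurable).2 hρ
  have hg2 := hg.memLp_two_sqrt hg0
  refine ⟨(integrable_toReal_rnDeriv_mul_iff hac).1 (hρ2.integrable_mul hg2), ?_⟩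
  have hsq : ∫ x, √(g x) ^ 2 ∂μ = ∫ x, g x ∂μ :=
    integral_congr_ae (hg0.mono fun _ hx => Real.sq_sqrt hx)
  rw [← integral_toReal_rnDeriv_mul hac, ← hsq]
  exact integral_mul_le_sqrt_mul_sqrt (.of_forall fun _ => ENNReal.toReal_nonneg)
    (.of_forall fun _ => Real.sqrt_nonneg _) hρ2 hg2

end

theorem constrained_risk_inequality_general_general {Z : Type*} [MeasurableSpace Z]
    (P₀ P₁ : Measure Z) [IsProbabilityMeasure P₀] [IsProbabilityMeasure P₁]
    (hac : P₁ ≪ P₀)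
    (hmono : MonotoneOn ℓ (Set.Ici 0)) (hnonneg : ∀ x ∈ Set.Ici (0 : ℝ), 0 ≤ ℓ x)
    {k : ℕ} (θ₀ θ₁ : EuclideanSpace ℝ (Fin k))
    (θhat : Z → EuclideanSpace ℝ (Fin k)) (δ : ℝ)
    (hI : Integrable (fun z => ((P₁.rnDeriv P₀ z).toReal) ^ 2) P₀)
    (hint₀ : Integrable (fun z => ℓ ‖θhat z - θ₀‖) P₀)
    (hint₁ : Integrable (fun z => ℓ ‖θhat z - θ₁‖) P₁)
    (hrisk : ∫ z, ℓ ‖θhat z - θ₀‖ ∂P₀ ≤ δ) :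
    (max (Real.sqrt (ℓ (‖θ₀ - θ₁‖ / 2)) -
        Real.sqrt ((∫ z, ((P₁.rnDeriv P₀ z).toReal) ^ 2 ∂P₀) * δ)) 0) ^ 2
      ≤ ∫ z, ℓ ‖θhat z - θ₁‖ ∂P₁ := by
  have hloss₀ : 0 ≤ᵐ[P₀] fun z => ℓ ‖θhat z - θ₀‖ :=
    .of_forall fun z => hnonneg _ (norm_nonneg _)
  have hloss₁ : 0 ≤ᵐ[P₁] fun z => ℓ ‖θhat z - θ₁‖ :=
    .of_forall fun z => hnonneg _ (norm_nonneg _)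
  obtain ⟨hsqrt₀, hrisk₀⟩ :=
    integrable_sqrt_and_integral_sqrt_le_of_rnDeriv_sq hac hI hint₀ hloss₀
  have hsqrt₁ := (hint₁.memLp_two_sqrt hloss₁).integrable one_le_two
  have hsplit : √(ℓ (‖θ₀ - θ₁‖ / 2)) ≤
      ∫ z, √(ℓ ‖θhat z - θ₀‖) ∂P₁ + ∫ z, √(ℓ ‖θhat z - θ₁‖) ∂P₁ := by
    rw [← integral_add hsqrt₀ hsqrt₁]
    simpa using integral_mono (integrable_const _) (hsqrt₀.add hsqrt₁)
      fun z => hmono.sqrt_apply_half_norm_sub_le θ₀ θ₁ (θhat z)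
  have hrisk₀' : ∫ z, √(ℓ ‖θhat z - θ₀‖) ∂P₁ ≤
      √((∫ z, ((P₁.rnDeriv P₀ z).toReal) ^ 2 ∂P₀) * δ) := by
    rw [Real.sqrt_mul (integral_nonneg fun _ => sq_nonneg _)]
    exact hrisk₀.trans (by gcongr)
  have hrisk₁ := integral_sqrt_le_sqrt_integral_s7 hint₁ hloss₁
  calc _ ≤ √(∫ z, ℓ ‖θhat z - θ₁‖ ∂P₁) ^ 2 := by
        gcongr
        exact max_le (by linarith) (Real.sqrt_nonneg _)
    _ = ∫ z, ℓ ‖θhat z - θ₁‖ ∂P₁ := Real.sq_sqrt (integral_nonneg_of_ae hloss₁)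

theorem constrained_risk_inequality_general {Z : Type*} [MeasurableSpace Z]
    (P₀ P₁ : Measure Z) [IsProbabilityMeasure P₀] [IsProbabilityMeasure P₁]
    (hac : P₁ ≪ P₀)
    (hmono : MonotoneOn ℓ (Set.Ici 0)) (hnonneg : ∀ x ∈ Set.Ici (0 : ℝ), 0 ≤ ℓ x)
    {k : ℕ} (θ₀ θ₁ : EuclideanSpace ℝ (Fin k))
    (θhat : Z → EuclideanSpace ℝ (Fin k)) (hmeas : Measurable θhat) (δ : ℝ)
    (hI : Integrable (fun z => ((P₁.rnDeriv P₀ z).toReal) ^ 2) P₀)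
    (hint₀ : Integrable (fun z => ℓ ‖θhat z - θ₀‖) P₀)
    (hint₁ : Integrable (fun z => ℓ ‖θhat z - θ₁‖) P₁)
    (hrisk : ∫ z, ℓ ‖θhat z - θ₀‖ ∂P₀ ≤ δ) :
    (max (Real.sqrt (ℓ (‖θ₀ - θ₁‖ / 2)) -
        Real.sqrt ((∫ z, ((P₁.rnDeriv P₀ z).toReal) ^ 2 ∂P₀) * δ)) 0) ^ 2
      ≤ ∫ z, ℓ ‖θhat z - θ₁‖ ∂P₁ :=
  constrained_risk_inequality_general_general P₀ P₁ hac hmono hnonneg θ₀ θ₁ θhat δ hI hint₀ hint₁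
    hrisk
end

section
/- Constrained risk inequality for power losses with 0 < k ≤ 2: Let P₀, P₁ be probability measures with P₁ ≪ P₀, θ₀, θ₁ ∈ ℝ^m, Δ = ‖θ₀ - θ₁‖, and I = ∫(dP₁/dP₀)² dP₀. If E_{P₀}[‖θ̂ - θ₀‖^k] ≤ δ^k, then E_{P₁}[‖θ̂ - θ₁‖^k] ≥ (max(Δ^{k/2} - (I·δ^k)^{1/2}, 0))². -/
/-!
Write `g = ‖θ̂ - θ₀‖^(k/2)` and `h = ‖θ̂ - θ₁‖^(k/2)`. Since `t ↦ t^(k/2)` is subadditive for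
`k ≤ 2`, the triangle inequality gives `Δ^(k/2) ≤ g + h` pointwise, hence
`Δ^(k/2) ≤ E₁ g + E₁ h`. Changing measure and applying Cauchy–Schwarz under `P₀`,
`E₁ g = E₀[(dP₁/dP₀) g] ≤ √(I · E₀ g²) ≤ √(I δ^k)`, while `E₁ h ≤ √(E₁ h²)` by Jensen.
-/

open MeasureTheory ProbabilityTheory

theorem dist_rpow_triangle {X : Type*} [PseudoMetricSpace X] {p : ℝ} (hp0 : 0 ≤ p)
    (hp1 : p ≤ 1) (x y z : X) : dist x y ^ p ≤ dist x z ^ p + dist z y ^ p :=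
  (Real.rpow_le_rpow dist_nonneg (dist_triangle x z y) hp0).trans
    (Real.rpow_add_le_add_rpow dist_nonneg dist_nonneg hp0 hp1)

theorem Real.rpow_half_sq {x : ℝ} (hx : 0 ≤ x) (k : ℝ) : (x ^ (k / 2)) ^ 2 = x ^ k := by
  rw [← Real.rpow_mul_natCast hx]
  norm_num

section Integrals

variable {α : Type*} [MeasurableSpace α]

theorem memLp_two_rpow_half {μ : Measure α} {f : α → ℝ} (hf0 : ∀ x, 0 ≤ f x) {k : ℝ}
    (hf : Integrable (fun x => f x ^ k) μ) : MemLp (fun x => f x ^ (k / 2)) 2 μ := by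
  have hmeas : AEStronglyMeasurable (fun x => f x ^ (k / 2)) μ := by
    have := (hf.aestronglyMeasurable.aemeasurable.pow_const (1 / 2 : ℝ)).aestronglyMeasurable
    convert this using 2 with x
    rw [← Real.rpow_mul (hf0 x)]
    ring_nf
  rw [memLp_two_iff_integrable_sq hmeas]
  simpa only [Real.rpow_half_sq (hf0 _)] using hf

theorem integral_mul_le_sqrt_integral_sq_mul {μ : Measure α} {f g : α → ℝ}
    (hf0 : 0 ≤ᵐ[μ] f) (hg0 : 0 ≤ᵐ[μ] g) (hf : MemLp f 2 μ) (hg : MemLp g 2 μ) :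
    ∫ x, f x * g x ∂μ ≤ √(∫ x, f x ^ 2 ∂μ) * √(∫ x, g x ^ 2 ∂μ) := by
  have := integral_mul_le_Lp_mul_Lq_of_nonneg Real.HolderConjugate.two_two hf0 hg0
    (by simpa using hf) (by simpa using hg)
  simpa [Real.sqrt_eq_rpow] using this

theorem integral_le_sqrt_integral_sq {μ : Measure α} [IsProbabilityMeasure μ] {f : α → ℝ}
    (hf : MemLp f 2 μ) : ∫ x, f x ∂μ ≤ √(∫ x, f x ^ 2 ∂μ) := by
  have hvar := variance_eq_sub hf ▸ variance_nonneg f μ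
  exact (le_abs_self _).trans (Real.abs_le_sqrt (by simpa using hvar))

theorem memLp_two_rnDeriv_iff {μ ν : Measure α} :
    MemLp (fun x => (μ.rnDeriv ν x).toReal) 2 ν ↔
      Integrable (fun x => (μ.rnDeriv ν x).toReal ^ 2) ν :=
  memLp_two_iff_integrable_sq
    (Measure.measurable_rnDeriv μ ν).ennreal_toReal.aestronglyMeasurable

variable {μ ν : Measure α} [SigmaFinite μ] [SigmaFinite ν]

theorem integrable_of_memLp_two_of_rnDeriv (hμν : μ ≪ ν)
    (hρ : MemLp (fun x => (μ.rnDeriv ν x).toReal) 2 ν) {f : α → ℝ} (hf : MemLp f 2 ν) :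
    Integrable f μ := by
  rw [← integrable_rnDeriv_smul_iff hμν]
  exact memLp_one_iff_integrable.mp
    (hf.smul hρ (hpqr := ⟨by simp [ENNReal.inv_two_add_inv_two]⟩))

theorem integral_le_sqrt_integral_rnDeriv_sq_mul (hμν : μ ≪ ν)
    (hρ : MemLp (fun x => (μ.rnDeriv ν x).toReal) 2 ν) {f : α → ℝ} (hf0 : 0 ≤ᵐ[ν] f)
    (hf : MemLp f 2 ν) :
    ∫ x, f x ∂μ ≤ √(∫ x, (μ.rnDeriv ν x).toReal ^ 2 ∂ν) * √(∫ x, f x ^ 2 ∂ν) := by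
  rw [← integral_rnDeriv_smul hμν]
  exact integral_mul_le_sqrt_integral_sq_mul (.of_forall fun _ => ENNReal.toReal_nonneg)
    hf0 hρ hf

end Integrals

theorem constrained_risk_inequality_power_low_general {Z : Type*} [MeasurableSpace Z]
    (P₀ P₁ : Measure Z) [IsProbabilityMeasure P₀] [IsProbabilityMeasure P₁]
    (hac : P₁ ≪ P₀)
    (k : ℝ) (hk0 : 0 < k) (hk2 : k ≤ 2)
    {m : ℕ} (θ₀ θ₁ : EuclideanSpace ℝ (Fin m))
    (θhat : Z → EuclideanSpace ℝ (Fin m))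
    (δ : ℝ)
    (hI : Integrable (fun z => ((P₁.rnDeriv P₀ z).toReal) ^ 2) P₀)
    (hint₀ : Integrable (fun z => ‖θhat z - θ₀‖ ^ k) P₀)
    (hint₁ : Integrable (fun z => ‖θhat z - θ₁‖ ^ k) P₁)
    (hrisk : ∫ z, ‖θhat z - θ₀‖ ^ k ∂P₀ ≤ δ ^ k) :
    (max (‖θ₀ - θ₁‖ ^ (k / 2) -
        Real.sqrt ((∫ z, ((P₁.rnDeriv P₀ z).toReal) ^ 2 ∂P₀) * δ ^ k)) 0) ^ 2
      ≤ ∫ z, ‖θhat z - θ₁‖ ^ k ∂P₁ := by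
  set I := ∫ z, (P₁.rnDeriv P₀ z).toReal ^ 2 ∂P₀
  set g : Z → ℝ := fun z => ‖θhat z - θ₀‖ ^ (k / 2)
  set h : Z → ℝ := fun z => ‖θhat z - θ₁‖ ^ (k / 2)
  have hρ := memLp_two_rnDeriv_iff.2 hI
  have hg : MemLp g 2 P₀ := memLp_two_rpow_half (fun _ => norm_nonneg _) hint₀
  have hh : MemLp h 2 P₁ := memLp_two_rpow_half (fun _ => norm_nonneg _) hint₁
  have hsplit : ‖θ₀ - θ₁‖ ^ (k / 2) ≤ ∫ z, g z ∂P₁ + ∫ z, h z ∂P₁ := by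
    have hg₁ := integrable_of_memLp_two_of_rnDeriv hac hρ hg
    have hh₁ := hh.integrable one_le_two
    calc ‖θ₀ - θ₁‖ ^ (k / 2) = ∫ _, ‖θ₀ - θ₁‖ ^ (k / 2) ∂P₁ := by simp
      _ ≤ ∫ z, g z + h z ∂P₁ := integral_mono (integrable_const _) (hg₁.add hh₁) fun z => ?_
      _ = _ := integral_add hg₁ hh₁
    have := dist_rpow_triangle (p := k / 2) (by positivity) (by linarith) θ₀ θ₁ (θhat z)
    rwa [dist_comm θ₀ (θhat z), dist_eq_norm, dist_eq_norm, dist_eq_norm] at this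
  have hEg : ∫ z, g z ∂P₁ ≤ √(I * δ ^ k) :=
    calc ∫ z, g z ∂P₁ ≤ √I * √(∫ z, ‖θhat z - θ₀‖ ^ k ∂P₀) := by
          simpa only [g, Real.rpow_half_sq (norm_nonneg _)] using
            integral_le_sqrt_integral_rnDeriv_sq_mul hac hρ
              (.of_forall fun _ => by positivity) hg
      _ ≤ √(I * δ ^ k) := by
          rw [← Real.sqrt_mul (integral_nonneg fun _ => sq_nonneg _)]
          gcongr
  have hEh : ∫ z, h z ∂P₁ ≤ √(∫ z, ‖θhat z - θ₁‖ ^ k ∂P₁) := by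
    simpa only [h, Real.rpow_half_sq (norm_nonneg _)] using integral_le_sqrt_integral_sq hh
  rw [← Real.le_sqrt (le_max_right _ _) (integral_nonneg fun _ => by positivity)]
  exact max_le (by linarith) (Real.sqrt_nonneg _)

theorem constrained_risk_inequality_power_low {Z : Type*} [MeasurableSpace Z]
    (P₀ P₁ : Measure Z) [IsProbabilityMeasure P₀] [IsProbabilityMeasure P₁]
    (hac : P₁ ≪ P₀)
    (k : ℝ) (hk0 : 0 < k) (hk2 : k ≤ 2)
    {m : ℕ} (θ₀ θ₁ : EuclideanSpace ℝ (Fin m))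
    (θhat : Z → EuclideanSpace ℝ (Fin m)) (hmeas : Measurable θhat)
    (δ : ℝ) (hδ : 0 ≤ δ)
    (hI : Integrable (fun z => ((P₁.rnDeriv P₀ z).toReal) ^ 2) P₀)
    (hint₀ : Integrable (fun z => ‖θhat z - θ₀‖ ^ k) P₀)
    (hint₁ : Integrable (fun z => ‖θhat z - θ₁‖ ^ k) P₁)
    (hrisk : ∫ z, ‖θhat z - θ₀‖ ^ k ∂P₀ ≤ δ ^ k) :
    (max (‖θ₀ - θ₁‖ ^ (k / 2) -
        Real.sqrt ((∫ z, ((P₁.rnDeriv P₀ z).toReal) ^ 2 ∂P₀) * δ ^ k)) 0) ^ 2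
      ≤ ∫ z, ‖θhat z - θ₁‖ ^ k ∂P₁ :=
  constrained_risk_inequality_power_low_general P₀ P₁ hac k hk0 hk2 θ₀ θ₁ θhat δ hI hint₀ hint₁
    hrisk
end

section
/- Constrained risk inequality for power losses with k ≥ 2: Let P₀, P₁ be probability measures with P₁ ≪ P₀, θ₀, θ₁ ∈ ℝ^m, Δ = ‖θ₀ - θ₁‖, and I = ∫(dP₁/dP₀)² dP₀. If E_{P₀}[‖θ̂ - θ₀‖^k] ≤ δ^k, then E_{P₁}[‖θ̂ - θ₁‖^k] ≥ (max(Δ - (I·δ²)^{1/2}, 0))^k. -/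
/-!
Under `P₀` the `k`-th moment bound gives `E₀‖θ̂ - θ₀‖² ≤ δ²` (monotonicity of `Lᵖ` norms on a
probability space). Changing measure with the density `ρ = dP₁/dP₀` and applying Cauchy–Schwarz
gives `E₁‖θ̂ - θ₀‖ = E₀[ρ ‖θ̂ - θ₀‖] ≤ √I δ`, so by the triangle inequality
`E₁‖θ̂ - θ₁‖ ≥ Δ - √I δ`. Jensen's inequality `(E₁‖θ̂ - θ₁‖)ᵏ ≤ E₁‖θ̂ - θ₁‖ᵏ` concludes.
-/

open MeasureTheory

namespace MeasureTheory

variable {α : Type*} [MeasurableSpace α]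

section Moments

variable {E : Type*} [NormedAddCommGroup E] {μ : Measure α} {f : α → E}

lemma memLp_ofReal_of_integrable_norm_rpow (hf : AEStronglyMeasurable f μ) {p : ℝ} (hp : 0 < p)
    (hint : Integrable (fun x => ‖f x‖ ^ p) μ) : MemLp f (ENNReal.ofReal p) μ :=
  (integrable_norm_rpow_iff hf (by simpa using hp) ENNReal.ofReal_ne_top).mp
    (by simpa [ENNReal.toReal_ofReal hp.le] using hint)

variable [IsProbabilityMeasure μ]

lemma integral_norm_rpow_rpow_inv_le_of_exponent_le (hf : AEStronglyMeasurable f μ) {p q : ℝ}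
    (hp : 0 < p) (hpq : p ≤ q) (hint : Integrable (fun x => ‖f x‖ ^ q) μ) :
    (∫ x, ‖f x‖ ^ p ∂μ) ^ p⁻¹ ≤ (∫ x, ‖f x‖ ^ q ∂μ) ^ q⁻¹ := by
  have hq : 0 < q := hp.trans_le hpq
  have hLq := memLp_ofReal_of_integrable_norm_rpow hf hq hint
  have hLp := hLq.mono_exponent (ENNReal.ofReal_le_ofReal hpq)
  have key := eLpNorm_le_eLpNorm_of_exponent_le (μ := μ) (ENNReal.ofReal_le_ofReal hpq) hf
  rwa [hLp.eLpNorm_eq_integral_rpow_norm (by simpa using hp) ENNReal.ofReal_ne_top,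
    hLq.eLpNorm_eq_integral_rpow_norm (by simpa using hq) ENNReal.ofReal_ne_top,
    ENNReal.toReal_ofReal hp.le, ENNReal.toReal_ofReal hq.le,
    ENNReal.ofReal_le_ofReal_iff (by positivity)] at key

lemma rpow_integral_norm_le_integral_norm_rpow (hf : AEStronglyMeasurable f μ) {q : ℝ}
    (hq : 1 ≤ q) (hint : Integrable (fun x => ‖f x‖ ^ q) μ) :
    (∫ x, ‖f x‖ ∂μ) ^ q ≤ ∫ x, ‖f x‖ ^ q ∂μ := by
  have h := integral_norm_rpow_rpow_inv_le_of_exponent_le hf zero_lt_one hq hint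
  simp only [Real.rpow_one, inv_one] at h
  exact (Real.le_rpow_inv_iff_of_pos (integral_nonneg fun _ => norm_nonneg _)
    (integral_nonneg fun _ => by positivity) (by linarith)).mp h

lemma integral_norm_sq_le_of_integral_norm_rpow_le (hf : AEStronglyMeasurable f μ) {q δ : ℝ}
    (hq : 2 ≤ q) (hδ : 0 ≤ δ) (hint : Integrable (fun x => ‖f x‖ ^ q) μ)
    (hmoment : ∫ x, ‖f x‖ ^ q ∂μ ≤ δ ^ q) :
    ∫ x, ‖f x‖ ^ 2 ∂μ ≤ δ ^ 2 := by
  have hq0 : 0 < q := by linarith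
  have h2 : (∫ x, ‖f x‖ ^ (2 : ℝ) ∂μ) ^ (2 : ℝ)⁻¹ ≤ δ :=
    calc (∫ x, ‖f x‖ ^ (2 : ℝ) ∂μ) ^ (2 : ℝ)⁻¹
        ≤ (∫ x, ‖f x‖ ^ q ∂μ) ^ q⁻¹ :=
          integral_norm_rpow_rpow_inv_le_of_exponent_le hf two_pos hq hint
      _ ≤ (δ ^ q) ^ q⁻¹ :=
          Real.rpow_le_rpow (integral_nonneg fun _ => by positivity) hmoment (by positivity)
      _ = δ := Real.rpow_rpow_inv hδ hq0.ne'
  simpa only [Real.rpow_two] using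
    (Real.rpow_inv_le_iff_of_pos (integral_nonneg fun _ => by positivity) hδ two_pos).mp h2

end Moments

lemma norm_sub_le_integral_norm_sub_add_integral_norm_sub {E : Type*} [NormedAddCommGroup E]
    {μ : Measure α} [IsProbabilityMeasure μ] {X : α → E} (hX : AEStronglyMeasurable X μ)
    (a b : E) (hb : Integrable (fun x => ‖X x - b‖) μ) :
    ‖a - b‖ ≤ ∫ x, ‖X x - a‖ ∂μ + ∫ x, ‖X x - b‖ ∂μ := by
  have hb' : Integrable (fun x => X x - b) μ :=
    (integrable_norm_iff (hX.sub aestronglyMeasurable_const)).mp hb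
  have ha : Integrable (fun x => ‖X x - a‖) μ := by
    simpa only [Pi.add_apply, sub_add_sub_cancel] using (hb'.add (integrable_const (b - a))).norm
  rw [← integral_add ha hb]
  calc ‖a - b‖ = ∫ _, ‖a - b‖ ∂μ := by simp
    _ ≤ ∫ x, ‖X x - a‖ + ‖X x - b‖ ∂μ :=
        integral_mono (integrable_const _) (ha.add hb) fun x => by
          simpa only [norm_sub_rev a] using norm_sub_le_norm_sub_add_norm_sub a (X x) b

lemma integral_mul_le_sqrt_integral_sq_mul_sqrt_integral_sq {μ : Measure α} {f g : α → ℝ}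
    (hf0 : 0 ≤ᵐ[μ] f) (hg0 : 0 ≤ᵐ[μ] g) (hf : MemLp f 2 μ) (hg : MemLp g 2 μ) :
    ∫ x, f x * g x ∂μ ≤ √(∫ x, f x ^ 2 ∂μ) * √(∫ x, g x ^ 2 ∂μ) := by
  have h := integral_mul_le_Lp_mul_Lq_of_nonneg Real.HolderConjugate.two_two hf0 hg0
    (by simpa using hf) (by simpa using hg)
  simpa only [Real.rpow_two, ← Real.sqrt_eq_rpow] using h

lemma integral_le_sqrt_integral_rnDeriv_sq_mul_sqrt_integral_sq {μ ν : Measure α}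
    [μ.HaveLebesgueDecomposition ν] [SigmaFinite μ] (hμν : μ ≪ ν) {g : α → ℝ}
    (hg0 : 0 ≤ᵐ[ν] g) (hg : MemLp g 2 ν)
    (hρ : Integrable (fun x => (μ.rnDeriv ν x).toReal ^ 2) ν) :
    ∫ x, g x ∂μ ≤ √(∫ x, (μ.rnDeriv ν x).toReal ^ 2 ∂ν) * √(∫ x, g x ^ 2 ∂ν) := by
  rw [← integral_toReal_rnDeriv_mul hμν]
  have hρ2 : MemLp (fun x => (μ.rnDeriv ν x).toReal) 2 ν :=
    (memLp_two_iff_integrable_sq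
      (Measure.measurable_rnDeriv μ ν).ennreal_toReal.aestronglyMeasurable).mpr hρ
  exact integral_mul_le_sqrt_integral_sq_mul_sqrt_integral_sq
    (ae_of_all _ fun _ => ENNReal.toReal_nonneg) hg0 hρ2 hg

end MeasureTheory

theorem constrained_risk_inequality_power_high {Z : Type*} [MeasurableSpace Z]
    (P₀ P₁ : Measure Z) [IsProbabilityMeasure P₀] [IsProbabilityMeasure P₁]
    (hac : P₁ ≪ P₀)
    (k : ℝ) (hk : 2 ≤ k)
    {m : ℕ} (θ₀ θ₁ : EuclideanSpace ℝ (Fin m))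
    (θhat : Z → EuclideanSpace ℝ (Fin m)) (hmeas : Measurable θhat)
    (δ : ℝ) (hδ : 0 ≤ δ)
    (hI : Integrable (fun z => ((P₁.rnDeriv P₀ z).toReal) ^ 2) P₀)
    (hint₀ : Integrable (fun z => ‖θhat z - θ₀‖ ^ k) P₀)
    (hint₁ : Integrable (fun z => ‖θhat z - θ₁‖ ^ k) P₁)
    (hrisk : ∫ z, ‖θhat z - θ₀‖ ^ k ∂P₀ ≤ δ ^ k) :
    (max (‖θ₀ - θ₁‖ -
        Real.sqrt ((∫ z, ((P₁.rnDeriv P₀ z).toReal) ^ 2 ∂P₀) * δ ^ 2)) 0) ^ k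
      ≤ ∫ z, ‖θhat z - θ₁‖ ^ k ∂P₁ := by
  have hk0 : 0 < k := by linarith
  have hf₀ : AEStronglyMeasurable (fun z => θhat z - θ₀) P₀ :=
    (hmeas.sub_const θ₀).aestronglyMeasurable
  have hf₁ : AEStronglyMeasurable (fun z => θhat z - θ₁) P₁ :=
    (hmeas.sub_const θ₁).aestronglyMeasurable
  have hsq₀ : ∫ z, ‖θhat z - θ₀‖ ^ 2 ∂P₀ ≤ δ ^ 2 :=
    integral_norm_sq_le_of_integral_norm_rpow_le hf₀ hk hδ hint₀ hrisk
  have hL2₀ : MemLp (fun z => ‖θhat z - θ₀‖) 2 P₀ := by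
    refine ((memLp_ofReal_of_integrable_norm_rpow hf₀ hk0 hint₀).mono_exponent ?_).norm
    simpa using ENNReal.ofReal_le_ofReal hk
  set I := ∫ z, ((P₁.rnDeriv P₀ z).toReal) ^ 2 ∂P₀
  have hrisk₁ : ∫ z, ‖θhat z - θ₀‖ ∂P₁ ≤ √(I * δ ^ 2) :=
    calc ∫ z, ‖θhat z - θ₀‖ ∂P₁ ≤ √I * √(∫ z, ‖θhat z - θ₀‖ ^ 2 ∂P₀) :=
          integral_le_sqrt_integral_rnDeriv_sq_mul_sqrt_integral_sq hac
            (ae_of_all _ fun _ => norm_nonneg _) hL2₀ hI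
      _ ≤ √I * √(δ ^ 2) := by gcongr
      _ = √(I * δ ^ 2) := (Real.sqrt_mul' _ (sq_nonneg δ)).symm
  have hL1₁ : Integrable (fun z => ‖θhat z - θ₁‖) P₁ := by
    simpa using integrable_norm_rpow_of_le hf₁ zero_le_one hk0.le (by linarith) hint₁
  have htri := norm_sub_le_integral_norm_sub_add_integral_norm_sub hmeas.aestronglyMeasurable
    θ₀ θ₁ hL1₁
  calc _ ≤ (∫ z, ‖θhat z - θ₁‖ ∂P₁) ^ k :=
        Real.rpow_le_rpow (le_max_right _ _)
          (max_le (by linarith) (integral_nonneg fun _ => norm_nonneg _)) hk0.le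
    _ ≤ _ := rpow_integral_norm_le_integral_norm_rpow hf₁ (by linarith) hint₁
end

section
/- Gaussian super-efficiency under 0-1 loss: Fix σ > 0 and c ∈ (0,1). For each n, let P_θⁿ be the n-fold product of N(θ, σ²), let R(θ̂, θ, n) = P_θⁿ(√n |θ̂ - θ| ≥ σ), and Θ_n = {θ ∈ ℝ : 2σ/√n ≤ |θ| ≤ (σ/√n)·√(c log(1/δ_n))}, where δ_n ∈ [0,1] with δ_n → 0. If estimators θ̂_n : ℝⁿ → ℝ satisfy R(θ̂_n, 0, n) ≤ δ_n for all n, then liminf_n inf_{θ ∈ Θ_n} R(θ̂_n, θ, n) = 1. -/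
open MeasureTheory ProbabilityTheory Filter Real
open scoped ENNReal NNReal Topology

/-!
Under `N(0, σ²)ⁿ` the likelihood ratio `dN(θ, σ²)ⁿ / dN(0, σ²)ⁿ` has second moment
`exp (n θ² / σ²)`, so by Cauchy–Schwarz `P_θ(A)² ≤ exp (n θ² / σ²) · P₀(A)` for every event `A`.
If `|θ| ≥ 2σ/√n`, an estimate within `σ/√n` of `θ` is an error at `0`, an event of
`P₀`-probability at most `δ`; and on `Θ_n` the factor `exp (n θ² / σ²)` is at most `δ^(-c)`.
So the risk at every `θ ∈ Θ_n` is at least `1 - δ^((1-c)/2)`, which tends to `1`.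
-/

namespace MeasureTheory

theorem withDensity_apply_sq_le {β : Type*} [MeasurableSpace β] (ν : Measure β) {f : β → ℝ≥0∞}
    (hf : AEMeasurable f ν) {S : Set β} (hS : MeasurableSet S) :
    ν.withDensity f S ^ 2 ≤ (∫⁻ x, f x ^ 2 ∂ν) * ν S := by
  set g : β → ℝ≥0∞ := S.indicator 1
  have hg_sq : ∫⁻ x, g x ^ (2 : ℝ) ∂ν = ν S := by
    rw [← lintegral_indicator_one hS]
    congr 1 with x
    by_cases hx : x ∈ S <;> simp [g, hx]
  have hfg : ν.withDensity f S = ∫⁻ x, (f * g) x ∂ν := by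
    rw [withDensity_apply _ hS, ← lintegral_indicator hS]
    congr 1 with x
    by_cases hx : x ∈ S <;> simp [g, hx]
  calc ν.withDensity f S ^ 2
      ≤ ((∫⁻ x, f x ^ (2 : ℝ) ∂ν) ^ (1 / 2 : ℝ) * (∫⁻ x, g x ^ (2 : ℝ) ∂ν) ^ (1 / 2 : ℝ)) ^ 2 := by
        rw [hfg]
        gcongr
        exact ENNReal.lintegral_mul_le_Lp_mul_Lq ν Real.HolderConjugate.two_two hf
          (aemeasurable_one.indicator hS)
    _ = (∫⁻ x, f x ^ 2 ∂ν) * ν S := by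
        rw [hg_sq, mul_pow, ← ENNReal.rpow_natCast, ← ENNReal.rpow_natCast, ← ENNReal.rpow_mul,
          ← ENNReal.rpow_mul]
        norm_num

variable {ι : Type*} [Fintype ι] {α : ι → Type*} [∀ i, MeasurableSpace (α i)]
  {μ : ∀ i, Measure (α i)} [∀ i, IsProbabilityMeasure (μ i)]

theorem lintegral_fintype_prod_eq_prod {f : ∀ i, α i → ℝ≥0∞} (hf : ∀ i, Measurable (f i)) :
    ∫⁻ x, ∏ i, f i (x i) ∂Measure.pi μ = ∏ i, ∫⁻ y, f i y ∂μ i := by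
  rw [lintegral_prod_eq_prod_lintegral_of_indepFun _ _
    (iIndepFun_pi fun i => (hf i).aemeasurable) fun i => (hf i).comp (measurable_pi_apply i)]
  exact Finset.prod_congr rfl fun i _ => (measurePreserving_eval μ i).lintegral_comp (hf i)

theorem Measure.pi_withDensity {f : ∀ i, α i → ℝ≥0∞} (hf : ∀ i, Measurable (f i))
    [∀ i, SigmaFinite ((μ i).withDensity (f i))] :
    Measure.pi (fun i => (μ i).withDensity (f i))
      = (Measure.pi μ).withDensity fun x => ∏ i, f i (x i) := by
  classical
  refine Measure.pi_eq fun s hs => ?_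
  have hbox : (Set.univ.pi s).indicator (fun x => ∏ i, f i (x i))
      = fun x => ∏ i, (s i).indicator (f i) (x i) := by
    ext x
    simp only [Set.indicator_apply, Set.mem_univ_pi, Finset.prod_ite_zero, Finset.mem_univ,
      true_implies]
  have hbox_meas := MeasurableSet.univ_pi hs
  rw [withDensity_apply _ hbox_meas, ← lintegral_indicator hbox_meas, hbox,
    lintegral_fintype_prod_eq_prod fun i => (hf i).indicator (hs i)]
  exact Finset.prod_congr rfl fun i _ => by
    rw [lintegral_indicator (hs i), withDensity_apply _ (hs i)]

end MeasureTheory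

namespace ProbabilityTheory

noncomputable def gaussianLikelihoodRatio (v : ℝ≥0) (θ x : ℝ) : ℝ≥0∞ :=
  ENNReal.ofReal (exp (θ * x / v - θ ^ 2 / (2 * v)))

variable {v : ℝ≥0}

theorem measurable_gaussianLikelihoodRatio (v : ℝ≥0) (θ : ℝ) :
    Measurable (gaussianLikelihoodRatio v θ) := by
  unfold gaussianLikelihoodRatio
  fun_prop

theorem gaussianPDF_eq_mul_gaussianLikelihoodRatio (hv : v ≠ 0) (θ x : ℝ) :
    gaussianPDF θ v x = gaussianPDF 0 v x * gaussianLikelihoodRatio v θ x := by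
  have hv' : (v : ℝ) ≠ 0 := by exact_mod_cast hv
  rw [gaussianPDF, gaussianPDF, gaussianLikelihoodRatio,
    ← ENNReal.ofReal_mul (gaussianPDFReal_nonneg _ _ _), gaussianPDFReal, gaussianPDFReal,
    mul_assoc _ (rexp _), ← Real.exp_add]
  congr 3
  field_simp
  ring

theorem gaussianReal_eq_withDensity_gaussianLikelihoodRatio (hv : v ≠ 0) (θ : ℝ) :
    gaussianReal θ v = (gaussianReal 0 v).withDensity (gaussianLikelihoodRatio v θ) := by
  rw [gaussianReal_of_var_ne_zero _ hv, gaussianReal_of_var_ne_zero _ hv,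
    ← withDensity_mul _ (measurable_gaussianPDF _ _) (measurable_gaussianLikelihoodRatio v θ)]
  congr 1 with x
  exact gaussianPDF_eq_mul_gaussianLikelihoodRatio hv θ x

theorem lintegral_gaussianLikelihoodRatio_sq (hv : v ≠ 0) (θ : ℝ) :
    ∫⁻ x, gaussianLikelihoodRatio v θ x ^ 2 ∂gaussianReal 0 v
      = ENNReal.ofReal (exp (θ ^ 2 / v)) := by
  have hv' : (v : ℝ) ≠ 0 := by exact_mod_cast hv
  have hsq : ∀ x, gaussianLikelihoodRatio v θ x ^ 2
      = ENNReal.ofReal (exp (-(θ ^ 2 / v)) * exp (2 * θ / v * x)) := fun x => by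
    rw [gaussianLikelihoodRatio, ← ENNReal.ofReal_pow (exp_nonneg _), ← Real.exp_nat_mul,
      ← Real.exp_add]
    congr 2
    field_simp
    ring
  simp_rw [hsq]
  rw [← ofReal_integral_eq_lintegral_ofReal
      ((integrable_exp_mul_gaussianReal _).const_mul _) (ae_of_all _ fun x => by positivity),
    integral_const_mul, ← mgf, mgf_fun_id_gaussianReal, ← Real.exp_add]
  congr 2
  field_simp
  ring

variable {ι : Type*} [Fintype ι]

theorem pi_gaussianReal_eq_withDensity (hv : v ≠ 0) (θ : ℝ) :
    Measure.pi (fun _ : ι => gaussianReal θ v)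
      = (Measure.pi fun _ : ι => gaussianReal 0 v).withDensity
          fun x => ∏ i, gaussianLikelihoodRatio v θ (x i) := by
  have hθ := gaussianReal_eq_withDensity_gaussianLikelihoodRatio hv θ
  have : IsProbabilityMeasure ((gaussianReal 0 v).withDensity (gaussianLikelihoodRatio v θ)) :=
    hθ ▸ inferInstance
  simp_rw [hθ]
  exact Measure.pi_withDensity fun _ => measurable_gaussianLikelihoodRatio v θ

theorem lintegral_pi_gaussianLikelihoodRatio_sq (hv : v ≠ 0) (θ : ℝ) :
    ∫⁻ x, (∏ i, gaussianLikelihoodRatio v θ (x i)) ^ 2 ∂Measure.pi (fun _ : ι => gaussianReal 0 v)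
      = ENNReal.ofReal (exp (Fintype.card ι * θ ^ 2 / v)) := by
  simp_rw [← Finset.prod_pow]
  rw [lintegral_fintype_prod_eq_prod fun _ => (measurable_gaussianLikelihoodRatio v θ).pow_const 2]
  simp_rw [lintegral_gaussianLikelihoodRatio_sq hv θ]
  rw [Finset.prod_const, Finset.card_univ, ← ENNReal.ofReal_pow (exp_nonneg _), ← Real.exp_nat_mul,
    mul_div_assoc]

theorem pi_gaussianReal_real_sq_le (hv : v ≠ 0) (θ : ℝ) {S : Set (ι → ℝ)} (hS : MeasurableSet S) :
    (Measure.pi fun _ : ι => gaussianReal θ v).real S ^ 2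
      ≤ exp (Fintype.card ι * θ ^ 2 / v) * (Measure.pi fun _ : ι => gaussianReal 0 v).real S := by
  have h := withDensity_apply_sq_le (Measure.pi fun _ : ι => gaussianReal 0 v)
    (f := fun x => ∏ i, gaussianLikelihoodRatio v θ (x i))
    (Finset.measurable_prod _ fun i _ =>
      (measurable_gaussianLikelihoodRatio v θ).comp (measurable_pi_apply i)).aemeasurable hS
  rw [← pi_gaussianReal_eq_withDensity hv, lintegral_pi_gaussianLikelihoodRatio_sq hv] at h
  have := ENNReal.toReal_mono (by finiteness) h
  rwa [ENNReal.toReal_pow, ENNReal.toReal_mul, ENNReal.toReal_ofReal (exp_nonneg _)] at this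

end ProbabilityTheory

section SuperEfficiency

-- The variance `⟨σ ^ 2, _⟩` is syntactically a `Subtype.mk`, not a term of type `ℝ≥0`, so instance
-- search does not unify it with the variance of `instIsProbabilityMeasureGaussianReal`.
instance isProbabilityMeasure_gaussianReal_mk (θ x : ℝ) (hx : 0 ≤ x) :
    IsProbabilityMeasure (gaussianReal θ ⟨x, hx⟩) :=
  instIsProbabilityMeasureGaussianReal θ _

noncomputable def gaussianRisk (σ : ℝ) (n : ℕ) (T : (Fin n → ℝ) → ℝ) (θ : ℝ) : ℝ :=
  (Measure.pi fun _ : Fin n => gaussianReal θ ⟨σ ^ 2, sq_nonneg σ⟩).real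
    {x | σ ≤ √n * |T x - θ|}

noncomputable def superEfficiencyAlternatives (σ c δ : ℝ) (n : ℕ) : Set ℝ :=
  {θ | 2 * σ / √n ≤ |θ| ∧ |θ| ≤ σ / √n * √(c * log (1 / δ))}

theorem lt_mul_abs_sub_of_mul_abs_sub_lt {r s a b t : ℝ} (hs : 0 ≤ s) (hab : 2 * r ≤ s * |a - b|)
    (ht : s * |t - a| < r) : r < s * |t - b| := by
  have := mul_le_mul_of_nonneg_left (abs_sub_le a t b) hs
  rw [abs_sub_comm a t] at this
  linarith

theorem exp_mul_sq_div_sq_le_rpow {σ c δ θ : ℝ} (hσ : 0 < σ) {n : ℕ} (hn : 0 < n) (hδ : 0 < δ)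
    (θ_mem : θ ∈ superEfficiencyAlternatives σ c δ n) :
    exp (n * θ ^ 2 / σ ^ 2) ≤ (1 / δ) ^ c := by
  obtain ⟨hlow, hup⟩ := θ_mem
  have hsqrt_n : 0 < √(n : ℝ) := Real.sqrt_pos.2 (Nat.cast_pos.2 hn)
  have hθ : 0 < |θ| := lt_of_lt_of_le (by positivity) hlow
  have hpos : 0 < |θ| * √n / σ := by positivity
  have hsq : (|θ| * √n / σ) ^ 2 ≤ c * log (1 / δ) := by
    rw [← Real.le_sqrt' hpos, div_le_iff₀ hσ]
    rw [div_mul_eq_mul_div, le_div_iff₀ hsqrt_n] at hup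
    linarith
  rw [Real.rpow_def_of_pos (one_div_pos.2 hδ), mul_comm (log _)]
  refine exp_le_exp.2 (le_of_eq_of_le ?_ hsq)
  rw [div_pow, mul_pow, sq_abs, Real.sq_sqrt (Nat.cast_nonneg n)]
  ring

theorem one_sub_sqrt_rpow_le_gaussianRisk {σ c δ θ : ℝ} (hσ : 0 < σ) {n : ℕ} (hn : 0 < n)
    {T : (Fin n → ℝ) → ℝ} (hT : Measurable T) (hδ : 0 < δ) (hT0 : gaussianRisk σ n T 0 ≤ δ)
    (θ_mem : θ ∈ superEfficiencyAlternatives σ c δ n) :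
    1 - √(δ ^ (1 - c)) ≤ gaussianRisk σ n T θ := by
  set error : ℝ → Set (Fin n → ℝ) := fun θ => {x | σ ≤ √n * |T x - θ|}
  have herror : MeasurableSet (error θ) :=
    measurableSet_le measurable_const (((hT.sub_const θ).abs).const_mul _)
  have hsep : (error θ)ᶜ ⊆ error 0 := fun x hx => by
    refine (lt_mul_abs_sub_of_mul_abs_sub_lt (Real.sqrt_nonneg _) ?_ (not_le.1 hx)).le
    rw [sub_zero, ← div_le_iff₀' (Real.sqrt_pos.2 (Nat.cast_pos.2 hn))]
    exact θ_mem.1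
  have hvar : (⟨σ ^ 2, sq_nonneg σ⟩ : ℝ≥0) ≠ 0 := fun h =>
    (pow_pos hσ 2).ne' (congrArg NNReal.toReal h)
  have hcompl_sq : (Measure.pi fun _ : Fin n => gaussianReal θ ⟨σ ^ 2, sq_nonneg σ⟩).real
      (error θ)ᶜ ^ 2 ≤ δ ^ (1 - c) := calc
    _ ≤ exp (n * θ ^ 2 / σ ^ 2)
        * (Measure.pi fun _ : Fin n => gaussianReal 0 ⟨σ ^ 2, sq_nonneg σ⟩).real (error θ)ᶜ := by
      have h := pi_gaussianReal_real_sq_le hvar θ herror.compl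
      rwa [Fintype.card_fin] at h
    _ ≤ (1 / δ) ^ c * δ := by
      gcongr
      · exact exp_mul_sq_div_sq_le_rpow hσ hn hδ θ_mem
      · exact (measureReal_mono hsep).trans hT0
    _ = δ ^ (1 - c) := by
      rw [Real.rpow_sub hδ, Real.rpow_one, Real.div_rpow zero_le_one hδ.le, Real.one_rpow]
      field_simp
  have := Real.le_sqrt_of_sq_le hcompl_sq
  rw [probReal_compl_eq_one_sub herror] at this
  exact sub_le_comm.1 this

theorem two_mul_div_sqrt_mem_superEfficiencyAlternatives {σ c δ : ℝ} (hσ : 0 ≤ σ) (n : ℕ)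
    (hL : 4 ≤ c * log (1 / δ)) : 2 * σ / √n ∈ superEfficiencyAlternatives σ c δ n := by
  have hpos : 0 ≤ 2 * σ / √n := by positivity
  refine ⟨(abs_of_nonneg hpos).ge, ?_⟩
  have h2 : 2 ≤ √(c * log (1 / δ)) := Real.le_sqrt_of_sq_le (by linarith)
  calc |2 * σ / √n| = σ / √n * 2 := by rw [abs_of_nonneg hpos]; ring
    _ ≤ σ / √n * √(c * log (1 / δ)) := by gcongr

theorem sInf_image_gaussianRisk_mem_Icc {σ c δ : ℝ} (hσ : 0 < σ) {n : ℕ} (hn : 0 < n)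
    {T : (Fin n → ℝ) → ℝ} (hT : Measurable T) (hδ : 0 < δ) (hT0 : gaussianRisk σ n T 0 ≤ δ)
    (hL : 4 ≤ c * log (1 / δ)) :
    sInf (gaussianRisk σ n T '' superEfficiencyAlternatives σ c δ n)
      ∈ Set.Icc (1 - √(δ ^ (1 - c))) 1 := by
  have hmem := two_mul_div_sqrt_mem_superEfficiencyAlternatives hσ.le n hL
  constructor
  · refine le_csInf ⟨_, Set.mem_image_of_mem _ hmem⟩ ?_
    rintro _ ⟨θ, θ_mem, rfl⟩
    exact one_sub_sqrt_rpow_le_gaussianRisk hσ hn hT hδ hT0 θ_mem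
  · refine (csInf_le ⟨0, ?_⟩ (Set.mem_image_of_mem _ hmem)).trans measureReal_le_one
    rintro _ ⟨θ, -, rfl⟩
    exact measureReal_nonneg

theorem tendsto_mul_log_one_div_atTop {α : Type*} {l : Filter α} {δ : α → ℝ} {c : ℝ} (hc : 0 < c)
    (hδ : ∀ x, 0 < δ x) (hδ0 : Tendsto δ l (𝓝 0)) :
    Tendsto (fun x => c * log (1 / δ x)) l atTop := by
  have hδ0' : Tendsto δ l (𝓝[>] 0) := tendsto_nhdsWithin_iff.2 ⟨hδ0, .of_forall hδ⟩
  simp_rw [one_div, Real.log_inv]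
  exact (tendsto_neg_atBot_atTop.comp (tendsto_log_nhdsGT_zero.comp hδ0')).const_mul_atTop hc

end SuperEfficiency

theorem gaussian_super_efficiency_zero_one_loss
    (σ : ℝ) (hσ : 0 < σ) (c : ℝ) (hc : c ∈ Set.Ioo (0 : ℝ) 1)
    (δ : ℕ → ℝ) (hδ : ∀ n, δ n ∈ Set.Ioc (0 : ℝ) 1)
    (hδ0 : Tendsto δ atTop (nhds 0))
    (θhat : (n : ℕ) → (Fin n → ℝ) → ℝ) (hmeas : ∀ n, Measurable (θhat n))
    (hsuper : ∀ n,
      ((Measure.pi fun _ : Fin n => gaussianReal 0 ⟨σ ^ 2, sq_nonneg σ⟩)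
          {x | σ ≤ Real.sqrt n * |θhat n x - 0|}).toReal ≤ δ n) :
    liminf (fun n =>
        sInf ((fun θ : ℝ =>
            ((Measure.pi fun _ : Fin n => gaussianReal θ ⟨σ ^ 2, sq_nonneg σ⟩)
                {x | σ ≤ Real.sqrt n * |θhat n x - θ|}).toReal) ''
          {θ : ℝ | 2 * σ / Real.sqrt n ≤ |θ| ∧
            |θ| ≤ σ / Real.sqrt n * Real.sqrt (c * Real.log (1 / δ n))}))
      atTop = 1 := by
  have hlow : Tendsto (fun n => 1 - √(δ n ^ (1 - c))) atTop (𝓝 1) := by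
    have h := ((hδ0.rpow_const (Or.inr (sub_pos.2 hc.2).le)).sqrt).const_sub 1
    rwa [Real.zero_rpow (sub_pos.2 hc.2).ne', Real.sqrt_zero, sub_zero] at h
  have hlarge : ∀ᶠ n in atTop, 0 < n ∧ 4 ≤ c * log (1 / δ n) :=
    (eventually_gt_atTop 0).and <|
      (tendsto_mul_log_one_div_atTop hc.1 (fun n => (hδ n).1) hδ0).eventually_ge_atTop 4
  have hbounds := hlarge.mono fun n ⟨hn, hL⟩ =>
    sInf_image_gaussianRisk_mem_Icc hσ hn (hmeas n) (hδ n).1 (hsuper n) hL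
  exact (tendsto_of_tendsto_of_tendsto_of_le_of_le' hlow tendsto_const_nhds
    (hbounds.mono fun _ h => h.1) (hbounds.mono fun _ h => h.2)).liminf_eq
end

section
/- Chi-square divergence of tilted distributions: with φ, K, P₀, g as in the tilting construction (φ : ℝ → [0,2] C³ with φ(0)=1, φ'(0)=1, ‖φ'‖_∞ ≤ K, ‖φ''‖_∞ ≤ K; E₀[g]=0, E₀[g²] < ∞) and dP_{t,g} = φ(tg)/C_t dP₀ where C_t = ∫φ(tg)dP₀, one has lim_{t→0} t⁻² χ²(P_{t,g} ‖ P₀) = E₀[g(Z)²], where χ²(P‖Q) = ∫ (dP/dQ - 1)² dQ. -/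
/-!
Write `φ (t g) = φ 0 + t Y_t` with the slope `Y_t = t⁻¹ (φ (t g) - φ 0)`. The χ²-divergence of the
tilt `W / E[W]` from `P₀` is `Var(W) / E[W]²`, so `t⁻² χ²(P_t ‖ P₀) = Var(Y_t) / C_t²`. Since `φ` is
`K`-Lipschitz, `|Y_t| ≤ K |g|`, and `Y_t → φ'(0) g` pointwise; by dominated convergence the first
two moments of `Y_t` converge to those of `g`. Hence `Var(Y_t) → Var(g) = E[g²]` and
`C_t = 1 + t E[Y_t] → 1`.
-/

open MeasureTheory Filter ProbabilityTheory Topology NNReal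

section TiltSlope

variable {Z : Type*} {φ : ℝ → ℝ} {K : ℝ≥0} {d : ℝ} {g : Z → ℝ}

noncomputable def tiltSlope (φ : ℝ → ℝ) (g : Z → ℝ) (t : ℝ) (z : Z) : ℝ :=
  t⁻¹ * (φ (t * g z) - φ 0)

lemma comp_mul_eq_add_mul_tiltSlope (t : ℝ) (z : Z) :
    φ (t * g z) = φ 0 + t * tiltSlope φ g t z := by
  rcases eq_or_ne t 0 with rfl | ht
  · simp
  · rw [tiltSlope, mul_inv_cancel_left₀ ht, add_sub_cancel]

lemma abs_tiltSlope_le (hφ : LipschitzWith K φ) (t : ℝ) (z : Z) :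
    |tiltSlope φ g t z| ≤ K * |g z| := by
  rcases eq_or_ne t 0 with rfl | ht
  · simp only [tiltSlope, inv_zero, zero_mul, abs_zero]; positivity
  have hlip : |φ (t * g z) - φ 0| ≤ K * (|t| * |g z|) := by
    simpa [Real.dist_eq, abs_mul] using hφ.dist_le_mul (t * g z) 0
  calc |tiltSlope φ g t z| ≤ |t|⁻¹ * (K * (|t| * |g z|)) := by
        rw [tiltSlope, abs_mul, abs_inv]; gcongr
    _ = K * |g z| := by field_simp

lemma tendsto_tiltSlope (hφ : HasDerivAt φ d 0) (z : Z) :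
    Tendsto (fun t => tiltSlope φ g t z) (𝓝[≠] 0) (𝓝 (d * g z)) := by
  have hlin : HasDerivAt (fun t : ℝ => t * g z) (g z) 0 := by
    simpa using (hasDerivAt_id (0 : ℝ)).mul_const (g z)
  have hφ' : HasDerivAt φ d (0 * g z) := by rwa [zero_mul]
  simpa [tiltSlope] using (hφ'.comp 0 hlin).tendsto_slope_zero

variable [MeasurableSpace Z] {μ : Measure Z}

lemma aestronglyMeasurable_tiltSlope (hφ : Continuous φ) (hg : AEStronglyMeasurable g μ)
    (t : ℝ) : AEStronglyMeasurable (tiltSlope φ g t) μ := by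
  unfold tiltSlope; fun_prop

lemma memLp_tiltSlope {p : ENNReal} (hφ : LipschitzWith K φ) (hg : MemLp g p μ) (t : ℝ) :
    MemLp (tiltSlope φ g t) p μ :=
  (hg.const_mul K).of_le (aestronglyMeasurable_tiltSlope hφ.continuous hg.1 t)
    (ae_of_all _ fun z => by simpa [abs_mul] using abs_tiltSlope_le hφ t z)

lemma tendsto_integral_tiltSlope_pow (hφ : LipschitzWith K φ) (hφ0 : HasDerivAt φ d 0) {n : ℕ}
    (hn : n ≠ 0) (hg : MemLp g n μ) :
    Tendsto (fun t => ∫ z, tiltSlope φ g t z ^ n ∂μ) (𝓝[≠] 0) (𝓝 (∫ z, (d * g z) ^ n ∂μ)) :=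
  tendsto_integral_filter_of_dominated_convergence (fun z => K ^ n * ‖g z‖ ^ n)
    (Eventually.of_forall fun t => (aestronglyMeasurable_tiltSlope hφ.continuous hg.1 t).pow n)
    (Eventually.of_forall fun t => ae_of_all _ fun z => by
      rw [norm_pow, ← mul_pow]; gcongr; exact abs_tiltSlope_le hφ t z)
    ((hg.integrable_norm_pow hn).const_mul _)
    (ae_of_all _ fun z => (tendsto_tiltSlope hφ0 z).pow n)

variable [IsProbabilityMeasure μ]

lemma tendsto_variance_tiltSlope (hφ : LipschitzWith K φ) (hφ0 : HasDerivAt φ d 0)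
    (hg : MemLp g 2 μ) :
    Tendsto (fun t => Var[tiltSlope φ g t; μ]) (𝓝[≠] 0) (𝓝 (d ^ 2 * Var[g; μ])) := by
  have h1 := tendsto_integral_tiltSlope_pow hφ hφ0 one_ne_zero (hg.mono_exponent (by norm_num))
  have h2 := tendsto_integral_tiltSlope_pow hφ hφ0 two_ne_zero hg
  simp only [pow_one, mul_pow, integral_const_mul] at h1 h2
  rw [variance_eq_sub hg, mul_sub, ← mul_pow]
  refine (h2.sub (h1.pow 2)).congr fun t => ?_
  rw [variance_eq_sub (memLp_tiltSlope hφ hg t)]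
  rfl

lemma variance_comp_mul (hφ : Continuous φ) (hg : AEStronglyMeasurable g μ) (t : ℝ) :
    Var[fun z => φ (t * g z); μ] = t ^ 2 * Var[tiltSlope φ g t; μ] := by
  simp_rw [comp_mul_eq_add_mul_tiltSlope (φ := φ) t]
  rw [variance_const_add ((aestronglyMeasurable_tiltSlope hφ hg t).const_mul t),
    variance_const_mul]

lemma tendsto_integral_comp_mul (hφ : LipschitzWith K φ) (hφ0 : HasDerivAt φ d 0)
    (hg : Integrable g μ) :
    Tendsto (fun t => ∫ z, φ (t * g z) ∂μ) (𝓝[≠] 0) (𝓝 (φ 0)) := by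
  have hmean := tendsto_integral_tiltSlope_pow hφ hφ0 one_ne_zero
    (by rw [Nat.cast_one]; exact memLp_one_iff_integrable.2 hg)
  have h := tendsto_const_nhds (x := φ 0) |>.add <|
    (tendsto_nhdsWithin_of_tendsto_nhds tendsto_id).mul hmean
  rw [zero_mul, add_zero] at h
  refine h.congr fun t => ?_
  simp_rw [comp_mul_eq_add_mul_tiltSlope (φ := φ) t, pow_one]
  rw [integral_add (integrable_const _)
    (((memLp_tiltSlope hφ (memLp_one_iff_integrable.2 hg) t).integrable le_rfl).const_mul t),
    integral_const, integral_const_mul]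
  simp

end TiltSlope

lemma integral_div_integral_sub_one_sq {Z : Type*} [MeasurableSpace Z] {μ : Measure Z}
    {W : Z → ℝ} (hW : AEMeasurable W μ) (h : ∫ z, W z ∂μ ≠ 0) :
    ∫ z, (W z / ∫ z, W z ∂μ - 1) ^ 2 ∂μ = Var[W; μ] / (∫ z, W z ∂μ) ^ 2 := by
  rw [variance_eq_integral hW, ← integral_div]
  refine integral_congr_ae (ae_of_all _ fun z => ?_)
  field_simp

lemma toReal_rnDeriv_withDensity_ofReal {Z : Type*} [MeasurableSpace Z] {μ : Measure Z}
    [SigmaFinite μ] {f : Z → ℝ} (hf : AEMeasurable f μ) (hf0 : 0 ≤ᵐ[μ] f) :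
    (fun z => ((μ.withDensity fun z => ENNReal.ofReal (f z)).rnDeriv μ z).toReal) =ᵐ[μ] f := by
  filter_upwards [Measure.rnDeriv_withDensity₀ μ hf.ennreal_ofReal, hf0] with z hz hz0
  rw [hz, ENNReal.toReal_ofReal hz0]

theorem chi_square_divergence_of_tilted_distributions_general {Z : Type*} [MeasurableSpace Z]
    (P₀ : Measure Z) [IsProbabilityMeasure P₀]
    (φ : ℝ → ℝ) (K : ℝ) (hφC : ContDiff ℝ 3 φ)
    (hrange : ∀ x, φ x ∈ Set.Icc (0 : ℝ) 2)
    (hφ0 : φ 0 = 1) (hφ'0 : deriv φ 0 = 1)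
    (hφ' : ∀ x, |deriv φ x| ≤ K)
    (g : Z → ℝ) (hgL2 : MemLp g 2 P₀)
    (hg0 : ∫ z, g z ∂P₀ = 0)
    (C : ℝ → ℝ) (hC : ∀ t, C t = ∫ z, φ (t * g z) ∂P₀)
    (P : ℝ → Measure Z)
    (hP : ∀ t, P t = P₀.withDensity (fun z => ENNReal.ofReal (φ (t * g z) / C t))) :
    Tendsto (fun t : ℝ =>
        t⁻¹ ^ 2 * ∫ z, (((P t).rnDeriv P₀ z).toReal - 1) ^ 2 ∂P₀)
      (nhdsWithin 0 {0}ᶜ) (nhds (∫ z, (g z) ^ 2 ∂P₀)) := by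
  have hφd : Differentiable ℝ φ := hφC.differentiable (by norm_num)
  have hlip : LipschitzWith K.toNNReal φ := lipschitzWith_of_nnnorm_deriv_le hφd fun x => by
    rw [← NNReal.coe_le_coe, coe_nnnorm, Real.coe_toNNReal K ((abs_nonneg _).trans (hφ' 0))]
    exact hφ' x
  have hφ_deriv : HasDerivAt φ 1 0 := hφ'0 ▸ (hφd 0).hasDerivAt
  have hφc := hφd.continuous
  have hgm := hgL2.aestronglyMeasurable
  have hCt : Tendsto C (𝓝[≠] 0) (𝓝 1) := by
    simpa only [← funext hC, hφ0] using
      tendsto_integral_comp_mul hlip hφ_deriv (hgL2.integrable one_le_two)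
  have hlim : Tendsto (fun t => Var[tiltSlope φ g t; P₀] / C t ^ 2) (𝓝[≠] 0)
      (𝓝 (∫ z, g z ^ 2 ∂P₀)) := by
    have h := (tendsto_variance_tiltSlope hlip hφ_deriv hgL2).div (hCt.pow 2) (by norm_num)
    simp only [one_pow, one_mul, div_one] at h
    rwa [variance_of_integral_eq_zero hgm.aemeasurable hg0] at h
  refine hlim.congr' ?_
  filter_upwards [self_mem_nhdsWithin, hCt.eventually_ne one_ne_zero] with t (ht : t ≠ 0) hCt0
  have hdens : 0 ≤ᵐ[P₀] fun z => φ (t * g z) / C t := ae_of_all _ fun z =>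
    div_nonneg (hrange _).1 (hC t ▸ integral_nonneg fun z => (hrange _).1)
  have hχ : ∫ z, (φ (t * g z) / C t - 1) ^ 2 ∂P₀
      = t ^ 2 * Var[tiltSlope φ g t; P₀] / C t ^ 2 := by
    rw [hC t, integral_div_integral_sub_one_sq (by fun_prop) (hC t ▸ hCt0),
      variance_comp_mul hφc hgm]
  have hrn : ∫ z, (((P t).rnDeriv P₀ z).toReal - 1) ^ 2 ∂P₀
      = ∫ z, (φ (t * g z) / C t - 1) ^ 2 ∂P₀ := by
    rw [hP t]
    exact integral_congr_ae <| (toReal_rnDeriv_withDensity_ofReal (by fun_prop) hdens).mono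
      fun z hz => congrArg (fun x => (x - 1) ^ 2) hz
  rw [hrn, hχ]
  field_simp

theorem chi_square_divergence_of_tilted_distributions {Z : Type*} [MeasurableSpace Z]
    (P₀ : Measure Z) [IsProbabilityMeasure P₀]
    (φ : ℝ → ℝ) (K : ℝ) (hφC : ContDiff ℝ 3 φ)
    (hrange : ∀ x, φ x ∈ Set.Icc (0 : ℝ) 2)
    (hφ0 : φ 0 = 1) (hφ'0 : deriv φ 0 = 1)
    (hφ' : ∀ x, |deriv φ x| ≤ K) (hφ'' : ∀ x, |deriv (deriv φ) x| ≤ K)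
    (g : Z → ℝ) (hg : Measurable g) (hgL2 : MemLp g 2 P₀)
    (hg0 : ∫ z, g z ∂P₀ = 0)
    (C : ℝ → ℝ) (hC : ∀ t, C t = ∫ z, φ (t * g z) ∂P₀)
    (P : ℝ → Measure Z)
    (hP : ∀ t, P t = P₀.withDensity (fun z => ENNReal.ofReal (φ (t * g z) / C t))) :
    Tendsto (fun t : ℝ =>
        t⁻¹ ^ 2 * ∫ z, (((P t).rnDeriv P₀ z).toReal - 1) ^ 2 ∂P₀)
      (nhdsWithin 0 {0}ᶜ) (nhds (∫ z, (g z) ^ 2 ∂P₀)) :=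
  chi_square_divergence_of_tilted_distributions_general P₀ φ K hφC hrange hφ0 hφ'0 hφ' g hgL2 hg0 C
    hC P hP
end

section
/- Asymptotic bound on the chi-square affinity along shrinking tilts: suppose for each n, t_n² ≤ (c/n)·log(1/δ_n) where δ_n → 0, δ_n ∈ (0,1), c ∈ (0,1), and suppose I_n := I(P_{t_n,g}ⁿ; P₀ⁿ) = (1 + (1 + o(1)) t_n² σ²)ⁿ with σ² ≤ 1. Then limsup_n I_n · δ_n^{c'} < ∞ for every c' > c; consequently, if an estimator sequence satisfies R(θ̂_n, P₀ⁿ) ≤ δ_n under a bounded loss with appropriate separation Δ_n = 1, the constrained risk inequality gives liminf_n R(θ̂_n, P_{t_n,g}ⁿ) = 1 when c < 1. -/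
/-!
Since `1 + x ≤ exp x`, the affinity satisfies `Iₙ ≤ exp (n xₙ)` with `xₙ = (1 + eₙ) tₙ² σ²`, and
`n xₙ ≤ (1 + eₙ) c log (1/δₙ)`. As soon as `1 + eₙ < c'/c` this gives `Iₙ ≤ δₙ^(-c')`. Taking
`c < c' < 1` then yields `Iₙ δₙ ≤ δₙ^(1 - c') → 0`, so the lower bound `(1 - √(Iₙ δₙ))₊²` on the
risk tends to `1`.
-/

open Filter Real

theorem one_add_pow_le_rpow_neg {x δ p : ℝ} {n : ℕ} (hx : -1 ≤ x) (hδ : 0 < δ)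
    (h : n * x ≤ p * log (1 / δ)) : (1 + x) ^ n ≤ δ ^ (-p) :=
  calc (1 + x) ^ n ≤ exp x ^ n :=
        pow_le_pow_left₀ (by linarith) (by linarith [add_one_le_exp x]) n
    _ = exp (n * x) := (exp_nat_mul x n).symm
    _ ≤ exp (p * log (1 / δ)) := exp_le_exp.2 h
    _ = δ ^ (-p) := by rw [rpow_def_of_pos hδ, one_div, log_inv]; ring_nf

theorem eventually_natCast_mul_le_of_sq_le {c c' σsq : ℝ} {L t e : ℕ → ℝ}
    (hc : 0 < c) (hcc' : c < c') (hσ0 : 0 ≤ σsq) (hσ1 : σsq ≤ 1)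
    (ht : ∀ n, t n ^ 2 ≤ c / n * L n) (he : Tendsto e atTop (nhds 0)) :
    ∀ᶠ n : ℕ in atTop, 0 ≤ (1 + e n) * t n ^ 2 * σsq ∧
      n * ((1 + e n) * t n ^ 2 * σsq) ≤ c' * L n := by
  have hratio : 1 < c' / c := (one_lt_div hc).2 hcc'
  filter_upwards [he.eventually_lt_const (sub_pos.2 hratio),
    he.eventually_const_lt neg_one_lt_zero, eventually_ne_atTop 0] with n he_lt he_gt hn
  have hpos : 0 ≤ (1 + e n) * t n ^ 2 := by have := sq_nonneg (t n); nlinarith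
  refine ⟨mul_nonneg hpos hσ0, ?_⟩
  calc n * ((1 + e n) * t n ^ 2 * σsq) ≤ n * ((c' / c) * t n ^ 2) := by
        gcongr (n : ℝ) * ?_
        calc (1 + e n) * t n ^ 2 * σsq ≤ (1 + e n) * t n ^ 2 := mul_le_of_le_one_right hpos hσ1
          _ ≤ c' / c * t n ^ 2 := by gcongr; linarith
    _ ≤ n * ((c' / c) * (c / n * L n)) := by gcongr; exact ht n
    _ = c' * L n := by field_simp

theorem eventually_affinity_mul_rpow_le_one {c c' σsq : ℝ} {δ t e : ℕ → ℝ}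
    (hc : 0 < c) (hcc' : c < c') (hσ0 : 0 ≤ σsq) (hσ1 : σsq ≤ 1) (hδ : ∀ n, 0 < δ n)
    (ht : ∀ n, t n ^ 2 ≤ c / n * log (1 / δ n)) (he : Tendsto e atTop (nhds 0)) :
    ∀ᶠ n : ℕ in atTop, (1 + (1 + e n) * t n ^ 2 * σsq) ^ n * δ n ^ c' ≤ 1 := by
  filter_upwards [eventually_natCast_mul_le_of_sq_le hc hcc' hσ0 hσ1 ht he] with n ⟨hx, hnx⟩
  calc (1 + (1 + e n) * t n ^ 2 * σsq) ^ n * δ n ^ c' ≤ δ n ^ (-c') * δ n ^ c' :=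
        mul_le_mul_of_nonneg_right (one_add_pow_le_rpow_neg (by linarith) (hδ n) hnx)
          (rpow_nonneg (hδ n).le c')
    _ = 1 := by rw [← rpow_add (hδ n), neg_add_cancel, rpow_zero]

theorem mul_le_rpow_one_sub_of_mul_rpow_le_one {u δ p : ℝ} (hδ : 0 < δ) (h : u * δ ^ p ≤ 1) :
    u * δ ≤ δ ^ (1 - p) :=
  calc u * δ = u * δ ^ p * δ ^ (1 - p) := by
        rw [mul_assoc, ← rpow_add hδ, add_sub_cancel, rpow_one]
    _ ≤ 1 * δ ^ (1 - p) := by gcongr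
    _ = δ ^ (1 - p) := one_mul _

theorem tendsto_sqrt_zero_of_le {α : Type*} {l : Filter α} {f g : α → ℝ}
    (hg : Tendsto g l (nhds 0)) (hfg : f ≤ᶠ[l] g) : Tendsto (fun x => √(f x)) l (nhds 0) := by
  have hsg : Tendsto (fun x => √(g x)) l (nhds 0) := by simpa using hg.sqrt
  exact tendsto_of_tendsto_of_tendsto_of_le_of_le' tendsto_const_nhds hsg
    (Eventually.of_forall fun _ => sqrt_nonneg _) (hfg.mono fun _ h => sqrt_le_sqrt h)

theorem asymptotic_chi_square_affinity_bound
    (c : ℝ) (hc : c ∈ Set.Ioo (0 : ℝ) 1)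
    (σsq : ℝ) (hσ0 : 0 ≤ σsq) (hσ1 : σsq ≤ 1)
    (δ : ℕ → ℝ) (hδ : ∀ n, δ n ∈ Set.Ioo (0 : ℝ) 1)
    (hδ0 : Tendsto δ atTop (nhds 0))
    (t : ℕ → ℝ) (ht : ∀ n, (t n) ^ 2 ≤ c / n * Real.log (1 / δ n))
    (e : ℕ → ℝ) (he : Tendsto e atTop (nhds 0))
    (I : ℕ → ℝ) (hI : ∀ n, I n = (1 + (1 + e n) * (t n) ^ 2 * σsq) ^ n) :
    (∀ c' : ℝ, c < c' → ∃ M : ℝ, ∀ᶠ n in atTop, I n * δ n ^ c' ≤ M) ∧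
      (∀ R : ℕ → ℝ,
        (∀ n, (max (1 - Real.sqrt (I n * δ n)) 0) ^ 2 ≤ R n) →
        (∀ n, R n ≤ 1) →
        liminf R atTop = 1) := by
  obtain ⟨hc0, hc1⟩ := hc
  have hδpos n : 0 < δ n := (hδ n).1
  have hbound c' (hcc' : c < c') : ∀ᶠ n in atTop, I n * δ n ^ c' ≤ 1 := by
    simpa only [hI] using eventually_affinity_mul_rpow_le_one hc0 hcc' hσ0 hσ1 hδpos ht he
  refine ⟨fun c' hcc' => ⟨1, hbound c' hcc'⟩, fun R hRlow hRup => ?_⟩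
  obtain ⟨c', hcc', hc'1⟩ := exists_between hc1
  have hIδ_le : ∀ᶠ n in atTop, I n * δ n ≤ δ n ^ (1 - c') :=
    (hbound c' hcc').mono fun n h => mul_le_rpow_one_sub_of_mul_rpow_le_one (hδpos n) h
  have hδ_rpow : Tendsto (fun n => δ n ^ (1 - c')) atTop (nhds 0) := by
    simpa [zero_rpow (sub_pos.2 hc'1).ne'] using hδ0.rpow_const (Or.inr (sub_pos.2 hc'1).le)
  have hlow : Tendsto (fun n => (max (1 - √(I n * δ n)) 0) ^ 2) atTop (nhds 1) := by
    have hsqrt := tendsto_sqrt_zero_of_le hδ_rpow hIδ_le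
    simpa using ((hsqrt.const_sub 1).max (tendsto_const_nhds (x := 0))).pow 2
  exact (tendsto_of_tendsto_of_tendsto_of_le_of_le hlow tendsto_const_nhds hRlow hRup).liminf_eq
end
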